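/- arXiv:2112.06265 — 2 statements merged into one kernel-verified Lean document; each statement's English description precedes it below -/
import Mathlib

section
/- For every γ > -2 and δ ≥ 0 there is a constant C > 0 such that for all ε > 0 and all χ ∈ [-π, π): |χ|·(max{χ⁴/ε^{γ+2}, 1})^{-1}·max{|χ|/ε^{δ}, 1} ≤ C·ε^{(γ+2)/4}·max{ε^{(γ+2)/4 - δ}, 1}. -/
open Real

lemma key_ineq (x a e : ℝ) (hx : 0 ≤ x) (ha : 0 < a) (he : 0 < e) :
    x * (max (x ^ 4 / a ^ 4) 1)⁻¹ * max (x / e) 1 ≤ a * max (a / e) 1 := by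
  have hm1 : (0:ℝ) < max (a / e) 1 := lt_of_lt_of_le one_pos (le_max_right _ _)
  rcases le_or_gt x a with h | h
  · calc x * (max (x ^ 4 / a ^ 4) 1)⁻¹ * max (x / e) 1
        ≤ x * 1 * max (x / e) 1 := by
          gcongr
          exact inv_le_one_of_one_le₀ (le_max_right _ _)
      _ = x * max (x / e) 1 := by ring
      _ ≤ a * max (a / e) 1 := by
          apply mul_le_mul h (max_le_max (by gcongr) le_rfl)
            (le_trans zero_le_one (le_max_right _ _)) ha.le
  · have h1 : (1:ℝ) ≤ x ^ 4 / a ^ 4 := by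
      rw [le_div_iff₀ (by positivity)]
      nlinarith [pow_lt_pow_left₀ h ha.le (by norm_num : (4:ℕ) ≠ 0)]
    rw [max_eq_left h1]
    have hmax : max (x / e) 1 ≤ (x / a) * max (a / e) 1 := by
      apply max_le
      · calc x / e = (x / a) * (a / e) := by field_simp
          _ ≤ (x / a) * max (a / e) 1 := by
              apply mul_le_mul_of_nonneg_left (le_max_left _ _) (by positivity)
      · calc (1:ℝ) = 1 * 1 := by ring
          _ ≤ (x / a) * max (a / e) 1 := by
              apply mul_le_mul _ (le_max_right _ _) zero_le_one (by positivity)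
              rw [le_div_iff₀ ha]; linarith
    calc x * (x ^ 4 / a ^ 4)⁻¹ * max (x / e) 1
        ≤ x * (x ^ 4 / a ^ 4)⁻¹ * ((x / a) * max (a / e) 1) := by
          apply mul_le_mul_of_nonneg_left hmax (by positivity)
      _ = (x * (x ^ 4 / a ^ 4)⁻¹ * (x / a)) * max (a / e) 1 := by ring
      _ ≤ a * max (a / e) 1 := by
          apply mul_le_mul_of_nonneg_right _ hm1.le
          rw [inv_div]
          have hxp : 0 < x := ha.trans h
          have heq : x * (a ^ 4 / x ^ 4) * (x / a) = a ^ 3 / x ^ 2 := by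
            field_simp
          rw [heq, div_le_iff₀ (by positivity)]
          nlinarith [mul_nonneg (mul_nonneg ha.le (sub_nonneg.2 h.le)) (by linarith : (0:ℝ) ≤ x + a)]

/-- For every `γ > -2` and `δ ≥ 0` there is `C > 0` such that for all `ε > 0` and all
`χ ∈ [-π, π)`:
`|χ|·(max{χ⁴/ε^{γ+2}, 1})⁻¹·max{|χ|/ε^δ, 1} ≤ C·ε^{(γ+2)/4}·max{ε^{(γ+2)/4 - δ}, 1}`. -/
theorem stmt_6 (γ δ : ℝ) (hγ : -2 < γ) (hδ : 0 ≤ δ) :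
    ∃ C : ℝ, 0 < C ∧ ∀ ε : ℝ, 0 < ε → ∀ χ ∈ Set.Ico (-π) π,
      |χ| * (max (χ ^ 4 / ε ^ (γ + 2)) 1)⁻¹ * max (|χ| / ε ^ δ) 1 ≤
        C * ε ^ ((γ + 2) / 4) * max (ε ^ ((γ + 2) / 4 - δ)) 1 := by
  refine ⟨1, one_pos, fun ε hε χ hχ => ?_⟩
  have ha : (0:ℝ) < ε ^ ((γ + 2) / 4) := rpow_pos_of_pos hε _
  have he : (0:ℝ) < ε ^ δ := rpow_pos_of_pos hε _
  have h4 : (ε ^ ((γ + 2) / 4)) ^ 4 = ε ^ (γ + 2) := by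
    rw [← rpow_natCast (ε ^ ((γ + 2) / 4)) 4, ← rpow_mul hε.le]
    norm_num
  have hsub : ε ^ ((γ + 2) / 4 - δ) = ε ^ ((γ + 2) / 4) / ε ^ δ := rpow_sub hε _ _
  have hχ4 : χ ^ 4 = |χ| ^ 4 := by
    rw [← abs_pow]; exact (abs_of_nonneg (by positivity)).symm
  rw [one_mul, hsub, ← h4, hχ4]
  exact key_ineq |χ| _ _ (abs_nonneg χ) ha he
end

section
/- Let A ∈ ℂ^{4×4} be Hermitian positive semidefinite satisfying, for some η > 0, A m · m̄ ≥ η·(χ⁴|(m₁,m₂)|² + χ²|(m₃,m₄)|²) for all m ∈ ℂ⁴ and a fixed χ with 0 < |χ| ≤ 1. Let C ∈ ℝ^{4×4} be diagonal positive definite with C ≥ c·I, c > 0. If m ∈ ℂ⁴ solves (χ^{-4}A + C)m = b with |b| ≤ M and additionally |⟨b, (0,0,m₃,m₄)⟩| ≤ M·|(m₃,m₄)|/|χ|, then |(m₁,m₂)| ≤ K·M and |(m₃,m₄)| ≤ K·|χ|·M for a constant K depending only on η and c. -/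
/-!
Pair the equation `(χ⁻⁴A + C) m = b` with `m`. Writing `x = |(m₁,m₂)|` and `v = |(m₃,m₄)| / |χ|`,
coercivity of `A` and `C ≥ 0` bound `Re ⟨b, m⟩` below by `η (x² + v²)`, while splitting
`m = (m₁,m₂,0,0) + (0,0,m₃,m₄)` and using the two bounds on `b` bound it above by `M (x + v)`.
Hence `η (x + v)² / 2 ≤ M (x + v)`, i.e. `x + v ≤ 2M/η`, and `K = 2/η` works.
-/

open scoped InnerProductSpace

lemma le_two_div_mul_of_mul_sq_add_sq_le {η M u v : ℝ} (hη : 0 < η) (hu : 0 ≤ u)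
    (hv : 0 ≤ v) (hM : 0 ≤ M) (h : η * (u ^ 2 + v ^ 2) ≤ M * (u + v)) :
    u ≤ 2 / η * M ∧ v ≤ 2 / η * M := by
  suffices hsum : η * (u + v) ≤ 2 * M by
    rw [div_mul_eq_mul_div, le_div_iff₀ hη, le_div_iff₀ hη]
    constructor <;> nlinarith
  rcases (add_nonneg hu hv).eq_or_lt with hzero | hpos
  · rw [← hzero, mul_zero]; positivity
  · refine le_of_mul_le_mul_right ?_ hpos
    nlinarith [mul_nonneg hη.le (sq_nonneg (u - v))]

lemma re_inner_nonneg_of_diagonal {𝕜 ι : Type*} [RCLike 𝕜] [Fintype ι] {d : ι → ℝ}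
    (hd : ∀ i, 0 ≤ d i) {v w : EuclideanSpace 𝕜 ι} (hvw : ∀ i, v i = (d i : 𝕜) * w i) :
    0 ≤ RCLike.re ⟪v, w⟫_𝕜 := by
  rw [PiLp.inner_apply, map_sum RCLike.re]
  refine Finset.sum_nonneg fun i _ => ?_
  rw [RCLike.inner_apply, hvw i, map_mul (starRingEnd 𝕜), RCLike.conj_ofReal, mul_left_comm,
    RCLike.mul_conj, ← RCLike.ofReal_pow, ← RCLike.ofReal_mul, RCLike.ofReal_re]
  exact mul_nonneg (hd i) (sq_nonneg _)

lemma mul_le_re_inner_ofReal_smul_add_apply_self {𝕜 E : Type*} [RCLike 𝕜]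
    [NormedAddCommGroup E] [InnerProductSpace 𝕜 E] {r L : ℝ} {A C : E →L[𝕜] E} {m : E}
    (hr : 0 ≤ r) (hA : L ≤ RCLike.re ⟪A m, m⟫_𝕜) (hC : 0 ≤ RCLike.re ⟪C m, m⟫_𝕜) :
    r * L ≤ RCLike.re ⟪((r : 𝕜) • A + C) m, m⟫_𝕜 := by
  rw [add_apply, smul_apply, inner_add_left, inner_smul_real_left, map_add, RCLike.smul_re]
  exact le_add_of_le_of_nonneg (mul_le_mul_of_nonneg_left hA hr) hC

lemma re_inner_le_norm_mul_add_norm_inner {𝕜 E : Type*} [RCLike 𝕜] [NormedAddCommGroup E]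
    [InnerProductSpace 𝕜 E] (b p q : E) :
    RCLike.re ⟪b, p + q⟫_𝕜 ≤ ‖b‖ * ‖p‖ + ‖⟪b, q⟫_𝕜‖ := by
  rw [inner_add_right, map_add]
  exact add_le_add ((RCLike.re_le_norm _).trans (norm_inner_le_norm b p)) (RCLike.re_le_norm _)

lemma re_inner_le_of_split_fin_four (b m : EuclideanSpace ℂ (Fin 4)) :
    RCLike.re ⟪b, m⟫_ℂ ≤ ‖b‖ * √(‖m 0‖ ^ 2 + ‖m 1‖ ^ 2) +
      ‖⟪b, (WithLp.toLp 2 (fun i => if (i : ℕ) < 2 then 0 else m i) :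
        EuclideanSpace ℂ (Fin 4))⟫_ℂ‖ := by
  set p : EuclideanSpace ℂ (Fin 4) := WithLp.toLp 2 (fun i => if (i : ℕ) < 2 then m i else 0)
  have hsplit : m = p + (WithLp.toLp 2 (fun i => if (i : ℕ) < 2 then 0 else m i) :
      EuclideanSpace ℂ (Fin 4)) := by
    ext i; fin_cases i <;> simp [p]
  have hp : ‖p‖ = √(‖m 0‖ ^ 2 + ‖m 1‖ ^ 2) := by
    simp [p, EuclideanSpace.norm_eq, Fin.sum_univ_four]
  conv_lhs => rw [hsplit]
  rw [← hp]
  exact re_inner_le_norm_mul_add_norm_inner b _ _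

/-- Let `A` be a Hermitian positive semidefinite operator on `ℂ⁴` whose quadratic form
satisfies `A m · m̄ ≥ η·(χ⁴|(m₁,m₂)|² + χ²|(m₃,m₄)|²)`, with `0 < |χ| ≤ 1`, and let `C`
be a real diagonal positive definite operator with `C ≥ c·I`. If `(χ⁻⁴A + C) m = b`,
`|b| ≤ M` and `|⟨b, (0,0,m₃,m₄)⟩| ≤ M·|(m₃,m₄)|/|χ|`, then `|(m₁,m₂)| ≤ K·M` and
`|(m₃,m₄)| ≤ K·|χ|·M` for a constant `K` depending only on `η` and `c`. -/
theorem stmt_10 (η c : ℝ) (hη : 0 < η) (hc : 0 < c) :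
    ∃ K : ℝ, 0 < K ∧
      ∀ (χ : ℝ), χ ≠ 0 → |χ| ≤ 1 →
      ∀ (A C : EuclideanSpace ℂ (Fin 4) →L[ℂ] EuclideanSpace ℂ (Fin 4)),
        IsSelfAdjoint A →
        (∀ m, 0 ≤ (inner ℂ (A m) m : ℂ).re) →
        (∀ m : EuclideanSpace ℂ (Fin 4),
          η * (χ ^ 4 * (‖m 0‖ ^ 2 + ‖m 1‖ ^ 2) + χ ^ 2 * (‖m 2‖ ^ 2 + ‖m 3‖ ^ 2)) ≤
            (inner ℂ (A m) m : ℂ).re) →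
        (∃ d : Fin 4 → ℝ, (∀ i, c ≤ d i) ∧
          ∀ (m : EuclideanSpace ℂ (Fin 4)) (i : Fin 4), C m i = (d i : ℂ) * m i) →
        ∀ (m b : EuclideanSpace ℂ (Fin 4)) (M : ℝ),
          ((((χ : ℂ) ^ 4)⁻¹ • A + C) m = b →
          ‖b‖ ≤ M →
          ‖((inner ℂ b (WithLp.toLp 2 (fun i => if (i : ℕ) < 2 then 0 else m i) :
                EuclideanSpace ℂ (Fin 4)) : ℂ))‖ ≤
            M * Real.sqrt (‖m 2‖ ^ 2 + ‖m 3‖ ^ 2) / |χ| →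
          Real.sqrt (‖m 0‖ ^ 2 + ‖m 1‖ ^ 2) ≤ K * M ∧
          Real.sqrt (‖m 2‖ ^ 2 + ‖m 3‖ ^ 2) ≤ K * |χ| * M) := by
  refine ⟨2 / η, by positivity, fun χ hχ _ A C _ _ hcoer hC m b M hsol hbM hbm => ?_⟩
  obtain ⟨d, hdc, hCd⟩ := hC
  have hχ' : 0 < |χ| := abs_pos.mpr hχ
  have hM : 0 ≤ M := (norm_nonneg b).trans hbM
  have hcoer_m := hcoer m
  rw [← Real.sq_sqrt (by positivity : 0 ≤ ‖m 0‖ ^ 2 + ‖m 1‖ ^ 2),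
    ← Real.sq_sqrt (by positivity : 0 ≤ ‖m 2‖ ^ 2 + ‖m 3‖ ^ 2)] at hcoer_m
  set x := √(‖m 0‖ ^ 2 + ‖m 1‖ ^ 2)
  set y := √(‖m 2‖ ^ 2 + ‖m 3‖ ^ 2)
  have hlower : η * (x ^ 2 + (y / |χ|) ^ 2) ≤ RCLike.re ⟪b, m⟫_ℂ := by
    have hscal : ((χ : ℂ) ^ 4)⁻¹ = ((χ ^ 4)⁻¹ : ℝ) := by push_cast; rfl
    have hpair := mul_le_re_inner_ofReal_smul_add_apply_self (r := (χ ^ 4)⁻¹) (by positivity)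
      hcoer_m (re_inner_nonneg_of_diagonal (fun i => hc.le.trans (hdc i)) (hCd m))
    rw [← hsol, hscal]
    refine le_of_eq_of_le ?_ hpair
    field_simp; rw [sq_abs]; ring
  have hupper : RCLike.re ⟪b, m⟫_ℂ ≤ M * (x + y / |χ|) := by
    calc RCLike.re ⟪b, m⟫_ℂ ≤ ‖b‖ * x + _ := re_inner_le_of_split_fin_four b m
      _ ≤ M * x + M * y / |χ| := add_le_add (by gcongr) hbm
      _ = M * (x + y / |χ|) := by ring
  obtain ⟨hx, hy⟩ := le_two_div_mul_of_mul_sq_add_sq_le hη (Real.sqrt_nonneg _)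
    (div_nonneg (Real.sqrt_nonneg _) hχ'.le) hM (hlower.trans hupper)
  rw [div_le_iff₀ hχ'] at hy
  exact ⟨hx, by linarith⟩
end
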